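/- Let λ ∈ P_I^+, let w_0^{I,λ} be the longest element of the stabilizer W_{I,λ} of λ in W_I, and let w_0^I be the longest element of W_I. Then λ̃ = w_0^{I,λ}(λ − w_0^I v(w_0^I λ)^{-1} ρ(k)); equivalently, v(λ) = v(w_0^I λ) w_0^I w_0^{I,λ}. -/

import Mathlib

/-!
Common setting: a finite crystallographic root system `R` with Weyl group `W` in a
Euclidean space `V` (we identify `𝔞*` with `𝔞 = V` via the inner product), a fixed set
of positive roots `Rpos`, simple roots `Pi`, fundamental weights `fw`, the weight
lattice `P`, dominant weights `Pplus`, and for a subset `I ⊆ Pi` of the simple roots the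
parabolic subgroup `W_I`, its positive roots `R_I^+`, `P_I^+`, the set `W^I` of minimal
coset representatives, lengths, the Bruhat order, the orderings `⪯`, `≤_∅`, `≤_I`, the
group algebra `ℂ[P]`, the orbit sums `m_I(λ)`, the compact torus `A` (encoded abstractly
through its normalized Haar measure and its orthonormal multiplicative characters
`e^λ = ev λ`, `λ ∈ P`), the weight function `δ_k` and the inner product `(·,·)_k`.
-/

open scoped RealInnerProductSpace BigOperators Classical
open MeasureTheory

noncomputable section

variable {V : Type*} [NormedAddCommGroup V] [InnerProductSpace ℝ V] [FiniteDimensional ℝ V]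

/-- A finite crystallographic root system in `V`, with a choice of positive roots,
the corresponding simple roots, and the fundamental weights. -/
structure RootData (V : Type*) [NormedAddCommGroup V] [InnerProductSpace ℝ V] where
  R : Finset V
  Rpos : Finset V
  Pi : Finset V
  fw : V → V
  nonzero : ∀ α ∈ R, α ≠ 0
  reflect_mem : ∀ α ∈ R, ∀ β ∈ R, β - (2 * ⟪β, α⟫ / ⟪α, α⟫) • α ∈ R
  crystallographic : ∀ α ∈ R, ∀ β ∈ R, ∃ n : ℤ, 2 * ⟪β, α⟫ / ⟪α, α⟫ = (n : ℝ)
  pos_subset : Rpos ⊆ R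
  pos_or_neg : ∀ α ∈ R, (α ∈ Rpos ↔ ¬ -α ∈ Rpos)
  simple_subset : Pi ⊆ Rpos
  pos_comb : ∀ α ∈ Rpos, ∃ c : V → ℝ, (∀ β, 0 ≤ c β) ∧ α = ∑ β ∈ Pi, c β • β
  span_R : Submodule.span ℝ (R : Set V) = ⊤
  fw_prop : ∀ α ∈ Pi, ∀ β ∈ Pi, ⟪fw α, (2 / ⟪β, β⟫) • β⟫ = (if α = β then 1 else 0)

/-- The orthogonal reflection `s_α` in the hyperplane orthogonal to `α`. -/
def rRefl (α : V) : V ≃ₗᵢ[ℝ] V := Submodule.reflection (ℝ ∙ α)ᗮ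

/-- The reflection group generated by the reflections in the elements of `S`. -/
def weylGen (S : Finset V) : Subgroup (V ≃ₗᵢ[ℝ] V) :=
  Subgroup.closure { w | ∃ α ∈ S, w = rRefl α }

namespace RootData

variable (D : RootData V)

/-- The Weyl group `W`, generated by the simple reflections. -/
def Weyl : Subgroup (V ≃ₗᵢ[ℝ] V) := Subgroup.closure { w | ∃ α ∈ D.Pi, w = rRefl α }

/-- The parabolic subgroup `W_I` generated by the simple reflections from `I ⊆ Π`. -/
abbrev WeylP (_D : RootData V) (I : Finset V) : Subgroup (V ≃ₗᵢ[ℝ] V) := weylGen I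

/-- `R_I^+ = R_I ∩ R^+`, the positive roots of the parabolic subsystem. -/
def RposI (I : Finset V) : Set V :=
  { α : V | α ∈ D.Rpos ∧ α ∈ Submodule.span ℝ (I : Set V) }

/-- `W^I = {v ∈ W ∣ v(R_I^+) ⊆ R^+}`, the minimal coset representatives of `W/W_I`. -/
def WsetI (I : Finset V) : Set (V ≃ₗᵢ[ℝ] V) :=
  { v | v ∈ D.Weyl ∧ ∀ α ∈ D.RposI I, v α ∈ D.Rpos }

/-- The weight lattice `P = {λ ∣ (λ, α^∨) ∈ ℤ for all α ∈ R}`. -/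
def P : Set V := { lam : V | ∀ α ∈ D.R, ∃ n : ℤ, 2 * ⟪lam, α⟫ / ⟪α, α⟫ = (n : ℝ) }

/-- The dominant weights `P^+`. -/
def Pplus : Set V := { lam ∈ D.P | ∀ α ∈ D.Rpos, 0 ≤ ⟪lam, α⟫ }

/-- `P^- = -P^+`. -/
def Pminus : Set V := { lam ∈ D.P | ∀ α ∈ D.Rpos, ⟪lam, α⟫ ≤ 0 }

/-- `P_I^+ = {λ ∈ P ∣ (λ,α) ≥ 0 for all α ∈ R_I^+}`. -/
def PplusI (I : Finset V) : Set V := { lam ∈ D.P | ∀ α ∈ D.RposI I, 0 ≤ ⟪lam, α⟫ }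

/-- `P_I^- = -P_I^+`. -/
def PminusI (I : Finset V) : Set V := { lam ∈ D.P | ∀ α ∈ D.RposI I, ⟪lam, α⟫ ≤ 0 }

/-- The Steinberg weight `λ_v = Σ_{α ∈ Π, v⁻¹α < 0} ϖ_α`. -/
def steinberg (v : V ≃ₗᵢ[ℝ] V) : V :=
  ∑ α ∈ D.Pi.filter (fun α => v⁻¹ α ∉ D.Rpos), D.fw α

/-- The length of `w` : the minimal length of a word in the simple reflections
expressing `w`. -/
def len (w : V ≃ₗᵢ[ℝ] V) : ℕ :=
  sInf { n | ∃ l : List (V ≃ₗᵢ[ℝ] V),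
    (∀ g ∈ l, ∃ α ∈ D.Pi, g = rRefl α) ∧ l.prod = w ∧ l.length = n }

/-- The Bruhat order on `W` (subword property): `u ≤ w` iff some reduced word for `w`
has a subword which is a word for `u`. -/
def bruhatLE (u w : V ≃ₗᵢ[ℝ] V) : Prop :=
  ∃ l : List (V ≃ₗᵢ[ℝ] V),
    (∀ g ∈ l, ∃ α ∈ D.Pi, g = rRefl α) ∧ l.prod = w ∧ l.length = D.len w ∧
    ∃ l' : List (V ≃ₗᵢ[ℝ] V), l'.Sublist l ∧ l'.prod = u

def Dominant (lam : V) : Prop := ∀ α ∈ D.Rpos, 0 ≤ ⟪lam, α⟫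

def AntiDominant (lam : V) : Prop := ∀ α ∈ D.Rpos, ⟪lam, α⟫ ≤ 0

def DominantI (I : Finset V) (lam : V) : Prop := ∀ α ∈ D.RposI I, 0 ≤ ⟪lam, α⟫

/-- `w = v̄(λ)`, the shortest element of `W` with `w λ₊ = λ` (where `λ₊ = w⁻¹λ` is the
dominant representative of `W·λ`). -/
def IsVbar (lam : V) (w : V ≃ₗᵢ[ℝ] V) : Prop :=
  w ∈ D.Weyl ∧ D.Dominant (w⁻¹ lam) ∧
    ∀ u ∈ D.Weyl, D.Dominant (u⁻¹ lam) → D.len w ≤ D.len u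

/-- `w = v(λ)`, the shortest element of `W` with `w λ = λ₋` antidominant. -/
def IsVmin (lam : V) (w : V ≃ₗᵢ[ℝ] V) : Prop :=
  w ∈ D.Weyl ∧ D.AntiDominant (w lam) ∧
    ∀ u ∈ D.Weyl, D.AntiDominant (u lam) → D.len w ≤ D.len u

/-- `w = v̄_I(λ)`, the shortest element of `W_I` with `w λ_{I,+} = λ`. -/
def IsVbarI (I : Finset V) (lam : V) (w : V ≃ₗᵢ[ℝ] V) : Prop :=
  w ∈ D.WeylP I ∧ D.DominantI I (w⁻¹ lam) ∧
    ∀ u ∈ D.WeylP I, D.DominantI I (u⁻¹ lam) → D.len w ≤ D.len u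

/-- `λ ⪯ μ` iff `μ - λ ∈ Q^+`. -/
def preceq (lam mu : V) : Prop :=
  ∃ c : V → ℕ, mu - lam = ∑ α ∈ D.Pi, (c α : ℝ) • α

/-- The ordering `λ ≤_∅ μ` of Heckman: `λ₊ ≺ μ₊`, or `λ₊ = μ₊` and `v̄(λ) ≤ v̄(μ)` in the
Bruhat order. -/
def leEmpty (lam mu : V) : Prop :=
  ∃ lamP muP : V, lamP ∈ D.Pplus ∧ muP ∈ D.Pplus ∧
    (∃ w ∈ D.Weyl, w lamP = lam) ∧ (∃ w ∈ D.Weyl, w muP = mu) ∧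
    ((D.preceq lamP muP ∧ lamP ≠ muP) ∨
      (lamP = muP ∧ ∃ vl vm : V ≃ₗᵢ[ℝ] V,
        D.IsVbar lam vl ∧ D.IsVbar mu vm ∧ D.bruhatLE vl vm))

def ltEmpty (lam mu : V) : Prop := D.leEmpty lam mu ∧ lam ≠ mu

/-- `≤_I`, the restriction of `≤_∅` to `P_I^+`. -/
def leI (I : Finset V) (lam mu : V) : Prop :=
  lam ∈ D.PplusI I ∧ mu ∈ D.PplusI I ∧ D.leEmpty lam mu

def ltI (I : Finset V) (lam mu : V) : Prop := D.leI I lam mu ∧ lam ≠ mu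

/-- `ρ(k) = ½ Σ_{α ∈ R^+} k_α α`. -/
def rho (k : V → ℝ) : V := (1/2 : ℝ) • ∑ α ∈ D.Rpos, k α • α

end RootData

/-- The action of `w ∈ W` on `ℂ[P] ⊆ ℂ[V]`, `e^λ ↦ e^{wλ}`. -/
def wAct (w : V ≃ₗᵢ[ℝ] V) (f : AddMonoidAlgebra ℂ V) : AddMonoidAlgebra ℂ V :=
  AddMonoidAlgebra.ofCoeff (Finsupp.mapDomain ⇑w f.coeff)

/-- `e^λ ∈ ℂ[V]`. -/
def expw (lam : V) : AddMonoidAlgebra ℂ V := AddMonoidAlgebra.ofCoeff (Finsupp.single lam 1)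

namespace RootData

variable (D : RootData V)

/-- The orbit `W_I · λ`. -/
def orbitI (I : Finset V) (lam : V) : Set V := { x | ∃ w ∈ D.WeylP I, w lam = x }

/-- `m_I(λ) = Σ_{μ ∈ W_I·λ} e^μ`. -/
def mI (I : Finset V) (lam : V) : AddMonoidAlgebra ℂ V :=
  ∑ᶠ mu ∈ D.orbitI I lam, expw mu

/-- `ℂ[P]^H`: the `H`-invariant elements of the group algebra `ℂ[P]` (realized inside
`ℂ[V]` as the elements supported on the weight lattice `P`). -/
def invSet (H : Subgroup (V ≃ₗᵢ[ℝ] V)) : Set (AddMonoidAlgebra ℂ V) :=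
  { f | (∀ x ∈ f.coeff.support, x ∈ D.P) ∧ ∀ w ∈ H, wAct w f = f }

end RootData

/-- The compact torus `A = i𝔞/(2πiQ^∨)`, encoded through an abstract probability space
together with the system of characters `ev λ = e^λ : A → ℂ`, `λ ∈ P`; the characters are
multiplicative in `λ`, unimodular, and orthonormal with respect to the (normalized Haar)
measure `μ`.  This data determines the joint distribution of the characters and hence
all the integrals below agree with those over the actual torus. -/
structure TorusData (D : RootData V) (A : Type*) [MeasurableSpace A]
    (μ : Measure A) where
  ev : V → A → ℂ
  ev_add : ∀ lam ∈ D.P, ∀ mu ∈ D.P, ∀ t, ev (lam + mu) t = ev lam t * ev mu t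
  ev_norm : ∀ lam ∈ D.P, ∀ t, ‖ev lam t‖ = 1
  ev_meas : ∀ lam ∈ D.P, Measurable (ev lam)
  ev_orth : ∀ lam ∈ D.P, ∀ mu ∈ D.P,
    (∫ t, (starRingEnd ℂ) (ev lam t) * ev mu t ∂μ) = if lam = mu then 1 else 0

namespace TorusData

variable {D : RootData V} {A : Type*} [MeasurableSpace A] {μ : Measure A}

/-- Evaluation of a Laurent polynomial `f ∈ ℂ[P]` as a function on the torus. -/
def evalF (T : TorusData D A μ) (f : AddMonoidAlgebra ℂ V) (t : A) : ℂ :=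
  Finsupp.sum f.coeff fun lam c => c * T.ev lam t

/-- The weight function `δ_k = ∏_{α∈R}(e^{α/2} - e^{-α/2})^{k_α}
= ∏_{α∈R^+} |e^α - 1|^{2k_α}` on `A` (the two expressions agree since `k` is
`W`-invariant and `|e^{α/2}-e^{-α/2}|² = |e^α - 1|²` as `|e^{α/2}| = 1`). -/
def deltaK (T : TorusData D A μ) (k : V → ℝ) (t : A) : ℝ :=
  ∏ α ∈ D.Rpos, ‖T.ev α t - 1‖ ^ (2 * k α)

/-- The inner product `(φ,ψ)_k = ∫_A conj(φ(t)) ψ(t) δ_k(t) dt` on `ℂ[P]`. -/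
def ipk (T : TorusData D A μ) (k : V → ℝ) (f g : AddMonoidAlgebra ℂ V) : ℂ :=
  ∫ t, (starRingEnd ℂ) (T.evalF f t) * T.evalF g t * ((T.deltaK k t : ℝ) : ℂ) ∂μ

/-- The defining property of the nonsymmetric Jacobi polynomial `E(λ,k)`:
`E = e^λ + Σ_{μ <_∅ λ} c_μ e^μ` and `(E, e^μ)_k = 0` for all `μ <_∅ λ`. -/
def IsNonsymJacobi (T : TorusData D A μ) (k : V → ℝ) (lam : V)
    (E : AddMonoidAlgebra ℂ V) : Prop :=
  (∃ c : V →₀ ℂ, c lam = 1 ∧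
      (∀ mu ∈ c.support, mu ∈ D.P ∧ (mu = lam ∨ D.ltEmpty mu lam)) ∧
      E = Finsupp.sum c fun mu a => a • expw mu) ∧
  ∀ mu ∈ D.P, D.ltEmpty mu lam → T.ipk k E (expw mu) = 0

/-- The defining property of the Jacobi polynomial `p_I(λ,k)`:
`p ∈ ℂ[P]^{W_I}`, `p = m_I(λ) + Σ_{μ <_I λ} c_μ m_I(μ)`, and `(p, m_I(μ))_k = 0` for
all `μ <_I λ`. -/
def IsJacobiI (T : TorusData D A μ) (I : Finset V) (k : V → ℝ) (lam : V)
    (p : AddMonoidAlgebra ℂ V) : Prop :=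
  p ∈ D.invSet (D.WeylP I) ∧
  (∃ c : V →₀ ℂ, c lam = 1 ∧
      (∀ mu ∈ c.support, mu ∈ D.PplusI I ∧ (mu = lam ∨ D.ltI I mu lam)) ∧
      p = Finsupp.sum c fun mu a => a • D.mI I mu) ∧
  ∀ mu ∈ D.PplusI I, D.ltI I mu lam → T.ipk k p (D.mI I mu) = 0

end TorusData


end

/-!
An element of the Weyl group is determined by the set of positive roots it makes negative.
A longest element of the stabilizer `W_{I,λ}` of `λ ∈ P_I^+` inverts exactly the positive
roots of `R_I` orthogonal to `λ` (for `λ = 0` this describes `w₀^I`), so both longest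
elements are involutions. Minimality forces `v(λ)α > 0` whenever `(λ, α) = 0`, hence `v(λ)`
inverts exactly the positive roots `α` with `(λ, α) > 0`. The element
`v(w₀^I λ) w₀^I w₀^{I,λ}` sends `λ` to the antidominant `v(w₀^I λ) w₀^I λ` and keeps the
positive roots orthogonal to `λ` positive, so it inverts the same roots as `v(λ)`.
-/

variable {V : Type*} [NormedAddCommGroup V] [InnerProductSpace ℝ V]

section ReflectionGroups

theorem rRefl_apply (α x : V) : rRefl α x = x - (2 * ⟪x, α⟫ / ⟪α, α⟫) • α := by
  rw [rRefl, Submodule.reflection_apply, Submodule.starProjection_orthogonal_val,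
    Submodule.starProjection_singleton, real_inner_self_eq_norm_sq, real_inner_comm α x]
  simp only [RCLike.ofReal_real_eq_id, id_eq, two_smul]
  module

theorem rRefl_inv (α : V) : (rRefl α)⁻¹ = rRefl α := Submodule.reflection_symm

theorem rRefl_mul_self (α : V) : rRefl α * rRefl α = 1 :=
  mul_eq_one_iff_eq_inv.mpr (rRefl_inv α).symm

theorem rRefl_self (α : V) : rRefl α α = -α :=
  Submodule.reflection_orthogonalComplement_singleton_eq_neg α

theorem rRefl_of_inner_eq_zero {α x : V} (h : ⟪x, α⟫ = 0) : rRefl α x = x := by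
  simp [rRefl_apply, h]

theorem rRefl_eq_of_mem_span_singleton {α β : V} (hβ : β ≠ 0) (h : β ∈ ℝ ∙ α) :
    rRefl β = rRefl α := by
  obtain ⟨c, rfl⟩ := Submodule.mem_span_singleton.mp h
  have hc : c ≠ 0 := by rintro rfl; simp at hβ
  simp only [rRefl, Submodule.span_singleton_smul_eq (IsUnit.mk0 c hc)]

theorem mul_rRefl_mul_inv (w : V ≃ₗᵢ[ℝ] V) (α : V) : w * rRefl α * w⁻¹ = rRefl (w α) := by
  ext x
  have h : ⟪w⁻¹ x, α⟫ = ⟪x, w α⟫ := by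
    rw [← w.inner_map_map, show w (w⁻¹ x) = x from w.apply_symm_apply x]
  change w (rRefl α (w⁻¹ x)) = rRefl (w α) x
  rw [rRefl_apply, rRefl_apply, map_sub, map_smul, h, w.inner_map_map,
    show w (w⁻¹ x) = x from w.apply_symm_apply x]

/-- The condition on words in the definition of `RootData.len`. -/
def IsReflWord (S : Finset V) (l : List (V ≃ₗᵢ[ℝ] V)) : Prop :=
  ∀ g ∈ l, ∃ γ ∈ S, g = rRefl γ

@[elab_as_elim]
theorem weylGen_induction {S : Finset V} {p : (V ≃ₗᵢ[ℝ] V) → Prop} (one : p 1)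
    (refl_mul : ∀ γ ∈ S, ∀ w ∈ weylGen S, p w → p (rRefl γ * w)) {w : V ≃ₗᵢ[ℝ] V}
    (hw : w ∈ weylGen S) : p w := by
  induction hw using Subgroup.closure_induction_left with
  | one => exact one
  | mul_left x hx y hy ih =>
    obtain ⟨γ, hγ, rfl⟩ := hx
    exact refl_mul γ hγ y hy ih
  | inv_mul_cancel x hx y hy ih =>
    obtain ⟨γ, hγ, rfl⟩ := hx
    rw [rRefl_inv]
    exact refl_mul γ hγ y hy ih

theorem weylGen_mono {S T : Finset V} (h : S ⊆ T) : weylGen S ≤ weylGen T :=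
  Subgroup.closure_mono fun _ ⟨γ, hγ, hw⟩ => ⟨γ, h hγ, hw⟩

theorem IsReflWord.prod_mem {S : Finset V} {l : List (V ≃ₗᵢ[ℝ] V)} (hl : IsReflWord S l) :
    l.prod ∈ weylGen S :=
  Subgroup.list_prod_mem (K := weylGen S) fun g hg => Subgroup.subset_closure (hl g hg)

theorem IsReflWord.reverse {S : Finset V} {l : List (V ≃ₗᵢ[ℝ] V)} (hl : IsReflWord S l) :
    IsReflWord S l.reverse :=
  fun g hg => hl g (List.mem_reverse.mp hg)

theorem IsReflWord.prod_reverse {S : Finset V} {l : List (V ≃ₗᵢ[ℝ] V)} (hl : IsReflWord S l) :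
    l.reverse.prod = l.prod⁻¹ := by
  rw [List.prod_inv_reverse, List.map_congr_left fun g hg => ?_, List.map_id']
  obtain ⟨γ, -, rfl⟩ := hl g hg
  exact rRefl_inv γ

theorem exists_isReflWord {S : Finset V} {w : V ≃ₗᵢ[ℝ] V} (hw : w ∈ weylGen S) :
    ∃ l, IsReflWord S l ∧ l.prod = w := by
  refine weylGen_induction ⟨[], by simp [IsReflWord], rfl⟩ (fun γ hγ w _ ih => ?_) hw
  obtain ⟨l, hl, rfl⟩ := ih
  refine ⟨rRefl γ :: l, ?_, List.prod_cons⟩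
  rintro g (_ | ⟨_, hg⟩)
  exacts [⟨γ, hγ, rfl⟩, hl g hg]

theorem map_mem_span_iff {I : Finset V} {w : V ≃ₗᵢ[ℝ] V} (hw : w ∈ weylGen I) (x : V) :
    w x ∈ Submodule.span ℝ (I : Set V) ↔ x ∈ Submodule.span ℝ (I : Set V) := by
  revert x
  refine weylGen_induction (fun _ => Iff.rfl) (fun γ hγ w _ ih x => ?_) hw
  rw [LinearIsometryEquiv.coe_mul, Function.comp_apply, rRefl_apply,
    Submodule.sub_mem_iff_left _ (Submodule.smul_mem _ _ (Submodule.subset_span hγ)), ih]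

end ReflectionGroups

namespace RootData

variable (D : RootData V)

section Basic

theorem simple_mem_R {γ : V} (hγ : γ ∈ D.Pi) : γ ∈ D.R :=
  D.pos_subset (D.simple_subset hγ)

theorem neg_mem_Rpos_iff {α : V} (hα : α ∈ D.R) : -α ∈ D.Rpos ↔ α ∉ D.Rpos := by
  rw [D.pos_or_neg α hα, not_not]

theorem rRefl_apply_mem_R {α β : V} (hα : α ∈ D.R) (hβ : β ∈ D.R) : rRefl α β ∈ D.R := by
  rw [rRefl_apply]
  exact D.reflect_mem α hα β hβ

theorem mem_span_Pi {α : V} (hα : α ∈ D.Rpos) : α ∈ Submodule.span ℝ (D.Pi : Set V) := by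
  obtain ⟨c, -, rfl⟩ := D.pos_comb α hα
  exact Submodule.sum_mem _ fun δ hδ => Submodule.smul_mem _ _ (Submodule.subset_span hδ)

theorem dominantI_zero (I : Finset V) : D.DominantI I 0 :=
  fun α _ => (inner_zero_left α).ge

theorem inner_fw {γ β : V} (hγ : γ ∈ D.Pi) (hβ : β ∈ D.Pi) :
    ⟪D.fw γ, β⟫ = if γ = β then ⟪β, β⟫ / 2 else 0 := by
  have hββ : ⟪β, β⟫ ≠ 0 := inner_self_ne_zero.mpr (D.nonzero β (D.simple_mem_R hβ))
  have h := D.fw_prop γ hγ β hβ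
  rw [real_inner_smul_right] at h
  have h2 : ⟪D.fw γ, β⟫ = ⟪β, β⟫ / 2 * (2 / ⟪β, β⟫ * ⟪D.fw γ, β⟫) := by
    field_simp
  rw [h2, h]
  split_ifs <;> ring

theorem inner_fw_sum (c : V → ℝ) {γ : V} (hγ : γ ∈ D.Pi) :
    ⟪D.fw γ, ∑ δ ∈ D.Pi, c δ • δ⟫ = c γ * (⟪γ, γ⟫ / 2) := by
  rw [inner_sum, Finset.sum_eq_single_of_mem γ hγ fun δ hδ hne => ?_]
  · rw [real_inner_smul_right, D.inner_fw hγ hγ, if_pos rfl]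
  · rw [real_inner_smul_right, D.inner_fw hγ hδ, if_neg hne.symm, mul_zero]

theorem inner_fw_nonneg {γ β : V} (hγ : γ ∈ D.Pi) (hβ : β ∈ D.Rpos) : 0 ≤ ⟪D.fw γ, β⟫ := by
  obtain ⟨c, hc, rfl⟩ := D.pos_comb β hβ
  rw [D.inner_fw_sum c hγ]
  exact mul_nonneg (hc γ) (div_nonneg real_inner_self_nonneg zero_le_two)

theorem mem_Rpos_of_inner_fw_pos {γ β : V} (hγ : γ ∈ D.Pi) (hβ : β ∈ D.R)
    (h : 0 < ⟪D.fw γ, β⟫) : β ∈ D.Rpos := by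
  by_contra hn
  have := D.inner_fw_nonneg hγ ((D.neg_mem_Rpos_iff hβ).mpr hn)
  rw [inner_neg_right] at this
  linarith

theorem inner_fw_eq_zero_of_mem_span {I : Finset V} (hI : I ⊆ D.Pi) {γ x : V} (hγ : γ ∈ D.Pi)
    (hγI : γ ∉ I) (hx : x ∈ Submodule.span ℝ (I : Set V)) : ⟪D.fw γ, x⟫ = 0 := by
  induction hx using Submodule.span_induction with
  | mem β hβ =>
    rw [D.inner_fw hγ (hI hβ), if_neg]
    rintro rfl
    exact hγI hβ
  | zero => exact inner_zero_right _
  | add x y _ _ hx hy => rw [inner_add_right, hx, hy, add_zero]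
  | smul c x _ hx => rw [real_inner_smul_right, hx, mul_zero]

theorem exists_nonneg_sum_eq {I : Finset V} (hI : I ⊆ D.Pi) {β : V} (hβ : β ∈ D.Rpos)
    (h : ∀ δ ∈ D.Pi, δ ∉ I → ⟪D.fw δ, β⟫ = 0) :
    ∃ c : V → ℝ, (∀ δ, 0 ≤ c δ) ∧ β = ∑ δ ∈ I, c δ • δ := by
  obtain ⟨c, hc, hβc⟩ := D.pos_comb β hβ
  refine ⟨c, hc, hβc.trans (Finset.sum_subset hI fun δ hδ hδI => ?_).symm⟩
  have hδδ : ⟪δ, δ⟫ / 2 ≠ 0 :=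
    div_ne_zero (inner_self_ne_zero.mpr (D.nonzero δ (D.simple_mem_R hδ))) two_ne_zero
  have hcδ := h δ hδ hδI
  rw [hβc, D.inner_fw_sum c hδ] at hcδ
  rw [(mul_eq_zero.mp hcδ).resolve_right hδδ, zero_smul]

theorem exists_inner_pos_of_mem_span {I : Finset V} (hI : I ⊆ D.Pi) {β : V} (hβ : β ∈ D.Rpos)
    (hspan : β ∈ Submodule.span ℝ (I : Set V)) : ∃ γ ∈ I, 0 < ⟪β, γ⟫ := by
  obtain ⟨c, hc, hβc⟩ := D.exists_nonneg_sum_eq hI hβ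
    fun δ hδ hδI => D.inner_fw_eq_zero_of_mem_span hI hδ hδI hspan
  by_contra! h
  have hββ : ⟪β, β⟫ ≤ 0 := by
    nth_rewrite 2 [hβc]
    rw [inner_sum]
    exact Finset.sum_nonpos fun δ hδ => by
      rw [real_inner_smul_right]
      exact mul_nonpos_of_nonneg_of_nonpos (hc δ) (h δ hδ)
  exact D.nonzero β (D.pos_subset hβ) (real_inner_self_nonpos.mp hββ)

theorem rRefl_mem_Rpos {γ β : V} (hγ : γ ∈ D.Pi) (hβ : β ∈ D.Rpos) (h : β ∉ ℝ ∙ γ) :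
    rRefl γ β ∈ D.Rpos := by
  by_contra hneg
  have hvanish : ∀ δ ∈ D.Pi, δ ∉ ({γ} : Finset V) → ⟪D.fw δ, β⟫ = 0 := by
    intro δ hδ hδγ
    have hfix : ⟪D.fw δ, rRefl γ β⟫ = ⟪D.fw δ, β⟫ := by
      rw [rRefl_apply, inner_sub_right, real_inner_smul_right, D.inner_fw hδ hγ,
        if_neg (by simpa using hδγ), mul_zero, sub_zero]
    refine le_antisymm (not_lt.mp fun hpos => hneg ?_) (D.inner_fw_nonneg hδ hβ)
    exact D.mem_Rpos_of_inner_fw_pos hδ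
      (D.rRefl_apply_mem_R (D.simple_mem_R hγ) (D.pos_subset hβ)) (hfix ▸ hpos)
  obtain ⟨c, -, hβc⟩ := D.exists_nonneg_sum_eq (Finset.singleton_subset_iff.mpr hγ) hβ hvanish
  rw [Finset.sum_singleton] at hβc
  exact h (hβc ▸ Submodule.smul_mem _ _ (Submodule.mem_span_singleton_self γ))

noncomputable def fwSum : V := ∑ γ ∈ D.Pi, D.fw γ

theorem inner_fwSum_simple {γ : V} (hγ : γ ∈ D.Pi) : ⟪D.fwSum, γ⟫ = ⟪γ, γ⟫ / 2 := by
  rw [fwSum, sum_inner, Finset.sum_eq_single_of_mem γ hγ fun δ hδ hne => ?_]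
  · rw [D.inner_fw hγ hγ, if_pos rfl]
  · rw [D.inner_fw hδ hγ, if_neg hne]

end Basic

section WeylGroup

theorem map_mem_R {w : V ≃ₗᵢ[ℝ] V} (hw : w ∈ D.Weyl) {α : V} (hα : α ∈ D.R) : w α ∈ D.R := by
  suffices ∀ α ∈ D.R, w α ∈ D.R from this α hα
  refine weylGen_induction (fun α hα => hα) (fun γ hγ w _ ih α hα => ?_) hw
  exact D.rRefl_apply_mem_R (D.simple_mem_R hγ) (ih α hα)

theorem weylP_le_weyl {I : Finset V} (hI : I ⊆ D.Pi) : D.WeylP I ≤ D.Weyl :=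
  weylGen_mono hI

/-- Take a counterexample of minimal height `⟪fwSum, β⟫`: some simple reflection `s_γ`,
`γ ∈ I`, lowers `β` unless `β` is a multiple of `γ`, and `s_β` is conjugate under `s_γ` to the
reflection in the lowered root. -/
theorem rRefl_mem_weylP {I : Finset V} (hI : I ⊆ D.Pi) {β : V} (hβ : β ∈ D.Rpos)
    (hspan : β ∈ Submodule.span ℝ (I : Set V)) : rRefl β ∈ D.WeylP I := by
  by_contra hβW
  obtain ⟨β₀, hβ₀, hmin⟩ :=
    (D.Rpos.filter fun β => β ∈ Submodule.span ℝ (I : Set V) ∧ rRefl β ∉ D.WeylP I).exists_min_image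
      (⟪D.fwSum, ·⟫) ⟨β, Finset.mem_filter.mpr ⟨hβ, hspan, hβW⟩⟩
  obtain ⟨hpos, hspan₀, hβ₀W⟩ := Finset.mem_filter.mp hβ₀
  obtain ⟨γ, hγI, hβγ⟩ := D.exists_inner_pos_of_mem_span hI hpos hspan₀
  have hγW : rRefl γ ∈ D.WeylP I := Subgroup.subset_closure ⟨γ, hγI, rfl⟩
  by_cases hmul : β₀ ∈ ℝ ∙ γ
  · exact hβ₀W (rRefl_eq_of_mem_span_singleton (D.nonzero _ (D.pos_subset hpos)) hmul ▸ hγW)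
  set β₁ := rRefl γ β₀ with hβ₁
  have hlower : ⟪D.fwSum, β₁⟫ < ⟪D.fwSum, β₀⟫ := by
    have hγγ : ⟪γ, γ⟫ ≠ 0 := inner_self_ne_zero.mpr (D.nonzero γ (D.simple_mem_R (hI hγI)))
    rw [hβ₁, rRefl_apply, inner_sub_right, real_inner_smul_right, D.inner_fwSum_simple (hI hγI)]
    field_simp
    linarith
  have hβ₁W : rRefl β₁ ∈ D.WeylP I := by
    by_contra h
    exact (hmin β₁ (Finset.mem_filter.mpr ⟨D.rRefl_mem_Rpos (hI hγI) hpos hmul,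
      (map_mem_span_iff hγW β₀).mpr hspan₀, h⟩)).not_gt hlower
  have hβ₀β₁ : β₀ = rRefl γ β₁ :=
    (congrArg (fun g : V ≃ₗᵢ[ℝ] V => g β₀) (rRefl_mul_self γ)).symm
  apply hβ₀W
  rw [hβ₀β₁, ← mul_rRefl_mul_inv]
  exact mul_mem (mul_mem hγW hβ₁W) (inv_mem hγW)

theorem rRefl_mem_weyl {α : V} (hα : α ∈ D.Rpos) : rRefl α ∈ D.Weyl :=
  D.rRefl_mem_weylP subset_rfl hα (D.mem_span_Pi hα)

theorem len_le_length {l : List (V ≃ₗᵢ[ℝ] V)} (hl : IsReflWord D.Pi l) :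
    D.len l.prod ≤ l.length :=
  Nat.sInf_le ⟨l, hl, rfl, rfl⟩

theorem exists_reduced_word {w : V ≃ₗᵢ[ℝ] V} (hw : w ∈ D.Weyl) :
    ∃ l, IsReflWord D.Pi l ∧ l.prod = w ∧ l.length = D.len w := by
  obtain ⟨l, hl, hlw⟩ := exists_isReflWord hw
  exact Nat.sInf_mem (⟨_, l, hl, hlw, rfl⟩ : Set.Nonempty {n | ∃ l : List (V ≃ₗᵢ[ℝ] V),
    IsReflWord D.Pi l ∧ l.prod = w ∧ l.length = n})

theorem len_inv {w : V ≃ₗᵢ[ℝ] V} (hw : w ∈ D.Weyl) : D.len w⁻¹ = D.len w := by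
  have hle : ∀ u ∈ D.Weyl, D.len u⁻¹ ≤ D.len u := by
    intro u hu
    obtain ⟨l, hl, rfl, hlen⟩ := D.exists_reduced_word hu
    simpa [hl.prod_reverse, hlen] using D.len_le_length hl.reverse
  exact le_antisymm (hle w hw) (by simpa using hle w⁻¹ (inv_mem hw))

/-- The exchange condition. -/
theorem exists_word_eq_mul_rRefl {l : List (V ≃ₗᵢ[ℝ] V)} (hl : IsReflWord D.Pi l) {α : V}
    (hα : α ∈ D.Rpos) (hneg : l.prod α ∉ D.Rpos) :
    ∃ l', IsReflWord D.Pi l' ∧ l'.prod = l.prod * rRefl α ∧ l'.length + 1 = l.length := by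
  induction l with
  | nil => exact absurd hα hneg
  | cons g t ih =>
    have ht : IsReflWord D.Pi t := fun x hx => hl x (List.mem_cons_of_mem g hx)
    obtain ⟨γ, hγ, rfl⟩ := hl g List.mem_cons_self
    by_cases htα : t.prod α ∈ D.Rpos
    · have hmul : t.prod α ∈ ℝ ∙ γ := not_not.mp (mt (D.rRefl_mem_Rpos hγ htα) hneg)
      have hγ' : rRefl γ = t.prod * rRefl α * (t.prod)⁻¹ := by
        rw [mul_rRefl_mul_inv, rRefl_eq_of_mem_span_singleton
          (D.nonzero _ (D.map_mem_R ht.prod_mem (D.pos_subset hα))) hmul]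
      refine ⟨t, ht, ?_, rfl⟩
      rw [List.prod_cons, hγ', inv_mul_cancel_right, mul_assoc, rRefl_mul_self, mul_one]
    · obtain ⟨l', hl', hprod, hlen⟩ := ih ht htα
      refine ⟨rRefl γ :: l', ?_, by rw [List.prod_cons, List.prod_cons, hprod, mul_assoc],
        by simp [hlen]⟩
      rintro x (_ | ⟨_, hx⟩)
      exacts [⟨γ, hγ, rfl⟩, hl' x hx]

theorem len_mul_rRefl_lt {w : V ≃ₗᵢ[ℝ] V} (hw : w ∈ D.Weyl) {α : V} (hα : α ∈ D.Rpos)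
    (hneg : w α ∉ D.Rpos) : D.len (w * rRefl α) < D.len w := by
  obtain ⟨l, hl, rfl, hlen⟩ := D.exists_reduced_word hw
  obtain ⟨l', hl', hprod, hlen'⟩ := D.exists_word_eq_mul_rRefl hl hα hneg
  have := D.len_le_length hl'
  rw [hprod] at this
  omega

theorem len_lt_len_mul_rRefl {w : V ≃ₗᵢ[ℝ] V} (hw : w ∈ D.Weyl) {α : V} (hα : α ∈ D.Rpos)
    (hpos : w α ∈ D.Rpos) : D.len w < D.len (w * rRefl α) := by
  have hneg : (w * rRefl α) α ∉ D.Rpos := by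
    rw [LinearIsometryEquiv.coe_mul, Function.comp_apply, rRefl_self, map_neg,
      D.neg_mem_Rpos_iff (D.map_mem_R hw (D.pos_subset hα)), not_not]
    exact hpos
  simpa [mul_assoc, rRefl_mul_self] using
    D.len_mul_rRefl_lt (mul_mem hw (D.rRefl_mem_weyl hα)) hα hneg

theorem eq_one_of_forall_mem_Rpos {w : V ≃ₗᵢ[ℝ] V} (hw : w ∈ D.Weyl)
    (h : ∀ γ ∈ D.Pi, w γ ∈ D.Rpos) : w = 1 := by
  obtain ⟨l, hl, rfl, hlen⟩ := D.exists_reduced_word hw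
  rcases l.eq_nil_or_concat with rfl | ⟨l', g, rfl⟩
  · rfl
  obtain ⟨γ, hγ, rfl⟩ := hl g (by simp)
  have hl' : IsReflWord D.Pi l' := fun x hx => hl x (by simp [hx])
  have hlt := D.len_lt_len_mul_rRefl hw (D.simple_subset hγ) (h γ hγ)
  simp only [List.prod_concat, List.length_concat] at hlt hlen
  rw [mul_assoc, rRefl_mul_self, mul_one] at hlt
  have := D.len_le_length hl'
  omega

theorem eq_of_forall_mem_Rpos_iff {u u' : V ≃ₗᵢ[ℝ] V} (hu : u ∈ D.Weyl) (hu' : u' ∈ D.Weyl)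
    (h : ∀ α ∈ D.Rpos, u α ∈ D.Rpos ↔ u' α ∈ D.Rpos) : u = u' := by
  induction hn : D.len u using Nat.strong_induction_on generalizing u u' with
  | _ n ih =>
  have hR : ∀ α ∈ D.R, u α ∈ D.Rpos ↔ u' α ∈ D.Rpos := by
    intro α hα
    by_cases hpos : α ∈ D.Rpos
    · exact h α hpos
    · have := h (-α) ((D.neg_mem_Rpos_iff hα).mpr hpos)
      rwa [map_neg, map_neg, D.neg_mem_Rpos_iff (D.map_mem_R hu hα),
        D.neg_mem_Rpos_iff (D.map_mem_R hu' hα), not_iff_not] at this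
  by_cases hsimple : ∀ γ ∈ D.Pi, u γ ∈ D.Rpos
  · rw [D.eq_one_of_forall_mem_Rpos hu hsimple, D.eq_one_of_forall_mem_Rpos hu'
      fun γ hγ => (h γ (D.simple_subset hγ)).mp (hsimple γ hγ)]
  obtain ⟨γ, hγ, hneg⟩ : ∃ γ ∈ D.Pi, u γ ∉ D.Rpos := by simpa using hsimple
  have hs := D.rRefl_mem_weyl (D.simple_subset hγ)
  refine mul_right_cancel (ih _ (hn ▸ D.len_mul_rRefl_lt hu (D.simple_subset hγ) hneg)
    (mul_mem hu hs) (mul_mem hu' hs) (fun α hα => hR _ ?_) rfl)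
  exact D.rRefl_apply_mem_R (D.simple_mem_R hγ) (D.pos_subset hα)

theorem map_mem_Rpos_of_not_mem_span {I : Finset V} (hI : I ⊆ D.Pi) {w : V ≃ₗᵢ[ℝ] V}
    (hw : w ∈ D.WeylP I) {α : V} (hα : α ∈ D.Rpos) (hout : α ∉ Submodule.span ℝ (I : Set V)) :
    w α ∈ D.Rpos := by
  suffices ∀ α ∈ D.Rpos, α ∉ Submodule.span ℝ (I : Set V) → w α ∈ D.Rpos from this α hα hout
  refine weylGen_induction (fun α hα _ => hα) (fun γ hγ w hw ih α hα hout => ?_) hw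
  refine D.rRefl_mem_Rpos (hI hγ) (ih α hα hout) fun hmem => hout ?_
  refine (map_mem_span_iff hw α).mp (Submodule.span_mono ?_ hmem)
  simpa using hγ

end WeylGroup

section Longest

def IsLongestInStabilizer (I : Finset V) (lam : V) (w : V ≃ₗᵢ[ℝ] V) : Prop :=
  w ∈ D.WeylP I ∧ w lam = lam ∧ ∀ u ∈ D.WeylP I, u lam = lam → D.len u ≤ D.len w

variable {D}

theorem IsLongestInStabilizer.mem_Rpos_iff {I : Finset V} (hI : I ⊆ D.Pi) {lam : V}
    {w : V ≃ₗᵢ[ℝ] V} (hlam : D.DominantI I lam) (hw : D.IsLongestInStabilizer I lam w)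
    {α : V} (hα : α ∈ D.Rpos) :
    w α ∈ D.Rpos ↔ ¬(α ∈ Submodule.span ℝ (I : Set V) ∧ ⟪lam, α⟫ = 0) := by
  obtain ⟨hwI, hfix, hmax⟩ := hw
  constructor
  · rintro hpos ⟨hspan, hperp⟩
    have hsI := D.rRefl_mem_weylP hI hα hspan
    have hfix' : (w * rRefl α) lam = lam := by
      rw [LinearIsometryEquiv.coe_mul, Function.comp_apply, rRefl_of_inner_eq_zero hperp, hfix]
    exact (D.len_lt_len_mul_rRefl (D.weylP_le_weyl hI hwI) hα hpos).not_ge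
      (hmax _ (mul_mem hwI hsI) hfix')
  · intro h
    by_cases hspan : α ∈ Submodule.span ℝ (I : Set V)
    · by_contra hneg
      have hwαR := D.map_mem_R (D.weylP_le_weyl hI hwI) (D.pos_subset hα)
      have hwα := (D.neg_mem_Rpos_iff hwαR).mpr hneg
      have h₁ := hlam _ ⟨hwα, Submodule.neg_mem _ ((map_mem_span_iff hwI α).mpr hspan)⟩
      have h₂ := hlam _ ⟨hα, hspan⟩
      rw [inner_neg_right, ← hfix, w.inner_map_map] at h₁
      exact h ⟨hspan, by linarith⟩
    · exact D.map_mem_Rpos_of_not_mem_span hI hwI hα hspan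

theorem IsLongestInStabilizer.inv {I : Finset V} (hI : I ⊆ D.Pi) {lam : V}
    {w : V ≃ₗᵢ[ℝ] V} (hw : D.IsLongestInStabilizer I lam w) :
    D.IsLongestInStabilizer I lam w⁻¹ := by
  obtain ⟨hwI, hfix, hmax⟩ := hw
  refine ⟨inv_mem hwI, ?_, fun u hu hu_fix => ?_⟩
  · conv_lhs => rw [← hfix]
    exact w.symm_apply_apply lam
  · rw [D.len_inv (D.weylP_le_weyl hI hwI)]
    exact hmax u hu hu_fix

theorem IsLongestInStabilizer.inv_eq_self {I : Finset V} (hI : I ⊆ D.Pi) {lam : V}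
    {w : V ≃ₗᵢ[ℝ] V} (hlam : D.DominantI I lam) (hw : D.IsLongestInStabilizer I lam w) :
    w⁻¹ = w :=
  D.eq_of_forall_mem_Rpos_iff (D.weylP_le_weyl hI (inv_mem hw.1)) (D.weylP_le_weyl hI hw.1)
    fun α hα => by rw [(hw.inv hI).mem_Rpos_iff hI hlam hα, hw.mem_Rpos_iff hI hlam hα]

/-- With `w₀ = w₀^I`: for `α ∈ R_I` orthogonal to `λ`, `w` makes `α` negative inside `R_I` and
`w₀` turns it positive again; outside `R_I` both keep `α` positive. -/
theorem IsLongestInStabilizer.apply_apply_mem_Rpos {I : Finset V} (hI : I ⊆ D.Pi) {lam : V}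
    {w w₀ : V ≃ₗᵢ[ℝ] V} (hlam : D.DominantI I lam) (hw : D.IsLongestInStabilizer I lam w)
    (hw₀ : D.IsLongestInStabilizer I 0 w₀) {α : V} (hα : α ∈ D.Rpos) (hperp : ⟪lam, α⟫ = 0) :
    w₀ (w α) ∈ D.Rpos := by
  by_cases hspan : α ∈ Submodule.span ℝ (I : Set V)
  · have hwαR := D.map_mem_R (D.weylP_le_weyl hI hw.1) (D.pos_subset hα)
    have hwα : -(w α) ∈ D.Rpos :=
      (D.neg_mem_Rpos_iff hwαR).mpr fun h => (hw.mem_Rpos_iff hI hlam hα).mp h ⟨hspan, hperp⟩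
    have hw₀α := (hw₀.mem_Rpos_iff hI (D.dominantI_zero I) hwα).not.mpr (not_not.mpr
      ⟨Submodule.neg_mem _ ((map_mem_span_iff hw.1 α).mpr hspan), inner_zero_left _⟩)
    rwa [map_neg, D.neg_mem_Rpos_iff (D.map_mem_R (D.weylP_le_weyl hI hw₀.1) hwαR),
      not_not] at hw₀α
  · exact D.map_mem_Rpos_of_not_mem_span hI hw₀.1
      (D.map_mem_Rpos_of_not_mem_span hI hw.1 hα hspan) (mt (map_mem_span_iff hw.1 α).mp hspan)

theorem IsVmin.mem_Rpos_of_inner_eq_zero {lam : V} {w : V ≃ₗᵢ[ℝ] V} (hw : D.IsVmin lam w)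
    {α : V} (hα : α ∈ D.Rpos) (hperp : ⟪lam, α⟫ = 0) : w α ∈ D.Rpos := by
  obtain ⟨hwW, hanti, hmin⟩ := hw
  by_contra hneg
  have hfix : (w * rRefl α) lam = w lam := congrArg w (rRefl_of_inner_eq_zero hperp)
  exact (D.len_mul_rRefl_lt hwW hα hneg).not_ge
    (hmin _ (mul_mem hwW (D.rRefl_mem_weyl hα)) (hfix ▸ hanti))

theorem mem_Rpos_iff_of_antiDominant {lam : V} {w : V ≃ₗᵢ[ℝ] V} (hw : w ∈ D.Weyl)
    (hanti : D.AntiDominant (w lam)) (hperp : ∀ α ∈ D.Rpos, ⟪lam, α⟫ = 0 → w α ∈ D.Rpos)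
    {α : V} (hα : α ∈ D.Rpos) : w α ∈ D.Rpos ↔ ⟪lam, α⟫ ≤ 0 := by
  have hinner : ⟪w lam, w α⟫ = ⟪lam, α⟫ := w.inner_map_map lam α
  rcases lt_trichotomy ⟪lam, α⟫ 0 with h | h | h
  · refine iff_of_true (not_not.mp fun hneg => ?_) h.le
    have := hanti _ ((D.neg_mem_Rpos_iff (D.map_mem_R hw (D.pos_subset hα))).mpr hneg)
    rw [inner_neg_right, hinner] at this
    linarith
  · exact iff_of_true (hperp α hα h) h.le
  · refine iff_of_false (fun hpos => ?_) h.not_ge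
    have := hanti _ hpos
    rw [hinner] at this
    linarith

theorem IsVmin.eq_of_antiDominant {lam : V} {v u : V ≃ₗᵢ[ℝ] V} (hv : D.IsVmin lam v)
    (hu : u ∈ D.Weyl) (hanti : D.AntiDominant (u lam))
    (hperp : ∀ α ∈ D.Rpos, ⟪lam, α⟫ = 0 → u α ∈ D.Rpos) : v = u :=
  D.eq_of_forall_mem_Rpos_iff hv.1 hu fun α hα => by
    rw [mem_Rpos_iff_of_antiDominant hv.1 hv.2.1 (fun _ => hv.mem_Rpos_of_inner_eq_zero) hα,
      mem_Rpos_iff_of_antiDominant hu hanti hperp hα]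

end Longest

end RootData

variable [FiniteDimensional ℝ V]

theorem statement_10_general (D : RootData V) (I : Finset V) (hI : I ⊆ D.Pi)
    (k : V → ℝ)
    (lam : V) (hlam : lam ∈ D.PplusI I)
    (w0Il : V ≃ₗᵢ[ℝ] V)
    (hw0Il : w0Il ∈ D.WeylP I ∧ w0Il lam = lam ∧
      ∀ u ∈ D.WeylP I, u lam = lam → D.len u ≤ D.len w0Il)
    (w0I : V ≃ₗᵢ[ℝ] V)
    (hw0I : w0I ∈ D.WeylP I ∧ ∀ u ∈ D.WeylP I, D.len u ≤ D.len w0I)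
    (vl : V ≃ₗᵢ[ℝ] V) (hvl : D.IsVmin lam vl)
    (v1 : V ≃ₗᵢ[ℝ] V) (hv1 : D.IsVmin (w0I lam) v1) :
    lam - vl⁻¹ (D.rho k) = w0Il (lam - w0I (v1⁻¹ (D.rho k))) ∧
    vl = v1 * w0I * w0Il := by
  have hlamI : D.DominantI I lam := hlam.2
  have hw0Il' : D.IsLongestInStabilizer I lam w0Il := hw0Il
  have hw0I' : D.IsLongestInStabilizer I 0 w0I :=
    ⟨hw0I.1, map_zero w0I, fun u hu _ => hw0I.2 u hu⟩
  have hu_lam : (v1 * w0I * w0Il) lam = v1 (w0I lam) := congrArg (v1 ∘ w0I) hw0Il.2.1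
  have hvl_eq : vl = v1 * w0I * w0Il := by
    refine hvl.eq_of_antiDominant (mul_mem (mul_mem hv1.1 (D.weylP_le_weyl hI hw0I.1))
      (D.weylP_le_weyl hI hw0Il.1)) (hu_lam ▸ hv1.2.1) fun α hα hperp => ?_
    refine hv1.mem_Rpos_of_inner_eq_zero (hw0Il'.apply_apply_mem_Rpos hI hlamI hw0I' hα hperp) ?_
    change ⟪w0I lam, w0I (w0Il α)⟫ = 0
    rw [w0I.inner_map_map, ← hw0Il.2.1, w0Il.inner_map_map, hperp]
  refine ⟨?_, hvl_eq⟩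
  rw [hvl_eq, mul_inv_rev, mul_inv_rev, hw0Il'.inv_eq_self hI hlamI,
    hw0I'.inv_eq_self hI (D.dominantI_zero I), map_sub, hw0Il.2.1]
  rfl

/-- Let `λ ∈ P_I^+`, let `w₀^{I,λ}` be the longest element of the
stabilizer `W_{I,λ}` of `λ` in `W_I`, and let `w₀^I` be the longest element of `W_I`.
Then `λ̃ = w₀^{I,λ}(λ − w₀^I v(w₀^I λ)⁻¹ ρ(k))`, where `λ̃ = λ - v(λ)⁻¹ρ(k)`;
equivalently, `v(λ) = v(w₀^I λ) w₀^I w₀^{I,λ}`. -/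
theorem statement_10 (D : RootData V) (I : Finset V) (hI : I ⊆ D.Pi)
    (k : V → ℝ) (hk0 : ∀ α ∈ D.R, 0 ≤ k α)
    (hkW : ∀ w ∈ D.Weyl, ∀ α ∈ D.R, k (w α) = k α)
    (lam : V) (hlam : lam ∈ D.PplusI I)
    (w0Il : V ≃ₗᵢ[ℝ] V)
    (hw0Il : w0Il ∈ D.WeylP I ∧ w0Il lam = lam ∧
      ∀ u ∈ D.WeylP I, u lam = lam → D.len u ≤ D.len w0Il)
    (w0I : V ≃ₗᵢ[ℝ] V)
    (hw0I : w0I ∈ D.WeylP I ∧ ∀ u ∈ D.WeylP I, D.len u ≤ D.len w0I)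
    (vl : V ≃ₗᵢ[ℝ] V) (hvl : D.IsVmin lam vl)
    (v1 : V ≃ₗᵢ[ℝ] V) (hv1 : D.IsVmin (w0I lam) v1) :
    lam - vl⁻¹ (D.rho k) = w0Il (lam - w0I (v1⁻¹ (D.rho k))) ∧
    vl = v1 * w0I * w0Il :=
  statement_10_general D I hI k lam hlam w0Il hw0Il w0I hw0I vl hvl v1 hv1
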